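/- Let alpha be an assembly in an FTAM system T, let c be a valid configuration of alpha and let c' be its chiral configuration. Then every frontier location f of alpha in configuration c has a corresponding frontier location f' of alpha in configuration c' (with the same tile type), such that attaching the tile at f to alpha in configuration c produces the same assembly as attaching the tile at f' to alpha in configuration c', with the two resulting configurations being chiral to each other. -/

import Mathlib

/-!
A formalization of the Flexible Tile Assembly Model (FTAM).

Tiles are unit squares placed on coplanar lattice points of `ℤ³`; each of the four
sides (N, E, S, W) carries a glue (an optional label with a complementation mark,
a strength, and a flexibility flag).  Assemblies are graphs of tiles with bonds;
configurations assign an orientation (Up / Down / Straight) to every bond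
(rigid bonds are forced Straight); a configuration is valid when it can be realized
by an embedding of the tiles into `ℤ³` without overlaps, without bonding through the
same space, and realizing every bond geometrically (which in particular rules out
contradicting bond loops).
-/

set_option synthInstance.maxSize 2048

namespace FTAM

/-- Integer vectors in `ℤ³`. -/
abbrev Vec3 := Fin 3 → ℤ

/-- The unit vector along axis `i`. -/
def unitVec (i : Fin 3) : Vec3 := fun j => if j = i then 1 else 0

/-- Cross product on `ℤ³`. -/
def cross (u v : Vec3) : Vec3 := fun i => u (i + 1) * v (i + 2) - u (i + 2) * v (i + 1)

/-- A coordinate direction: an axis together with a sign (`true` = positive). -/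
abbrev Dir := Fin 3 × Bool

/-- The vector of a direction. -/
def dirVec (d : Dir) : Vec3 := fun j => (if d.2 then 1 else -1) * unitVec d.1 j

/-- Sides of a tile: `0` = N, `1` = E, `2` = S, `3` = W. -/
abbrev Side := Fin 4

/-- Orientations of a bond: `0` = Up, `1` = Down, `2` = Straight. -/
abbrev Orientation := Fin 3

def Orientation.up : Orientation := 0
def Orientation.down : Orientation := 1
def Orientation.straight : Orientation := 2

/-- Inversion of an orientation: swaps Up and Down, fixes Straight. -/
def invertOr (o : Orientation) : Orientation := if o = 0 then 1 else if o = 1 then 0 else 2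

/-- A glue: an optional label (a base label together with a `Bool` marking the starred
complement; `none` is the null glue), a strength and a flexibility flag
(`true` = flexible). -/
abbrev Glue := Option (ℕ × Bool) × ℕ × Bool

def glueStrength (g : Glue) : ℕ := g.2.1
def glueFlexible (g : Glue) : Bool := g.2.2

/-- Two glues can bind: complementary labels, equal strengths, equal flexibility. -/
def gluesMatch (g g' : Glue) : Prop :=
  (∃ a b, g.1 = some (a, b) ∧ g'.1 = some (a, !b)) ∧ g.2.1 = g'.2.1 ∧ g.2.2 = g'.2.2

/-- A tile type: the glues on its N, E, S and W sides. -/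
abbrev TileType := Glue × Glue × Glue × Glue

def tileGlue (t : TileType) (s : Side) : Glue :=
  if s = 0 then t.1 else if s = 1 then t.2.1 else if s = 2 then t.2.2.1 else t.2.2.2

/-- A bond: an unordered pair of (tile index, side) pairs, recorded as a pair. -/
abbrev BondSpec := (ℕ × Side) × (ℕ × Side)

/-- An assembly: the list of its tiles (given by their tile types) together with the
list of its bonds. -/
abbrev Assembly := List TileType × List BondSpec

/-- A configuration: an orientation for each bond (in the order of the bond list). -/
abbrev Configuration := List Orientation

/-- A placement of a tile: its location (minimal corner), the normal direction of its
plane, and the direction its N side points to. -/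
abbrev Placement := Vec3 × Dir × Dir

/-- An embedding: a placement for each tile (in the order of the tile list). -/
abbrev Embedding := List Placement

/-- The glue sitting on side `x.2` of tile `x.1` of the assembly. -/
def glueAt (α : Assembly) (x : ℕ × Side) : Glue := tileGlue (α.1.getD x.1 default) x.2

/-- The chiral configuration: swap Up and Down on every bond, keep Straight. -/
def chiralCfg (c : Configuration) : Configuration := c.map invertOr

def normalAxis (p : Placement) : Fin 3 := p.2.1.1

def normalVec (p : Placement) : Vec3 := dirVec p.2.1

/-- Twice the center of a placed tile. -/
def center2 (p : Placement) : Vec3 :=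
  (2 : ℤ) • p.1 + unitVec (normalAxis p + 1) + unitVec (normalAxis p + 2)

/-- The in-plane direction from the center of a placed tile towards the side `s`. -/
def sideDir (p : Placement) (s : Side) : Vec3 :=
  if s = 0 then dirVec p.2.2
  else if s = 1 then cross (dirVec p.2.2) (normalVec p)
  else if s = 2 then -dirVec p.2.2
  else -cross (dirVec p.2.2) (normalVec p)

/-- Twice the midpoint of side `s` of a placed tile. -/
def sideMid (p : Placement) (s : Side) : Vec3 := center2 p + sideDir p s

/-- The direction along which side `s` of a placed tile runs. -/
def sideAxis (p : Placement) (s : Side) : Vec3 := cross (sideDir p s) (normalVec p)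

/-- Well-formedness of a placement: the orientation is perpendicular to the normal. -/
def PlacementOK (p : Placement) : Prop := p.2.1.1 ≠ p.2.2.1

/-- Two sides of two placed tiles are adjacent (they occupy the same unit segment). -/
def sidesAdjacent (p : Placement) (s : Side) (p' : Placement) (s' : Side) : Prop :=
  sideMid p s = sideMid p' s' ∧
    (sideAxis p s = sideAxis p' s' ∨ sideAxis p s = -sideAxis p' s')

/-- Geometric realization of a bond between side `s` of a tile placed at `p` and side
`s'` of a tile placed at `p'`, in relative orientation `θ`: the sides are adjacent and
the normals are Straight (equal), or meet in front (Up), or meet behind (Down). -/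
def orientedBond (p : Placement) (s : Side) (p' : Placement) (s' : Side)
    (θ : Orientation) : Prop :=
  sidesAdjacent p s p' s' ∧
    (if θ = Orientation.straight then normalVec p = normalVec p'
     else if θ = Orientation.up then
       ∃ t t' : ℤ, 0 < t ∧ 0 < t' ∧
         center2 p + t • normalVec p = center2 p' + t' • normalVec p'
     else
       ∃ t t' : ℤ, 0 < t ∧ 0 < t' ∧
         center2 p - t • normalVec p = center2 p' - t' • normalVec p')

/-- Two placements overlap if they occupy the same tile location. -/
def overlap (p p' : Placement) : Prop := p.1 = p'.1 ∧ normalAxis p = normalAxis p'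

/-- Structural well-formedness of an assembly: bonds join existing tiles, each tile
side takes part in at most one bond, and bound glues are complementary with equal
strengths and equal flexibility flags. -/
def AssemblyWF (α : Assembly) : Prop :=
  (∀ b ∈ α.2, b.1.1 < α.1.length ∧ b.2.1 < α.1.length) ∧
  (α.2.flatMap fun b => [b.1, b.2]).Nodup ∧
  ∀ b ∈ α.2, gluesMatch (glueAt α b.1) (glueAt α b.2)

/-- `e` is an embedding of the assembly `α` realizing the configuration `c`: tiles are
placed without overlaps, every bond is realized geometrically in its prescribed
orientation (so there are no contradicting bond loops), rigid bonds are Straight, and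
no two pairs of coplanar tiles bind through the same space. -/
def Realizes (α : Assembly) (c : Configuration) (e : Embedding) : Prop :=
  AssemblyWF α ∧ e.length = α.1.length ∧ c.length = α.2.length ∧
  (∀ p ∈ e, PlacementOK p) ∧
  (∀ i j, i < e.length → j < e.length → i ≠ j →
    ¬ overlap (e.getD i default) (e.getD j default)) ∧
  (∀ k, k < α.2.length →
    orientedBond (e.getD (α.2.getD k default).1.1 default) (α.2.getD k default).1.2
      (e.getD (α.2.getD k default).2.1 default) (α.2.getD k default).2.2
      (c.getD k Orientation.straight)) ∧
  (∀ k, k < α.2.length → glueFlexible (glueAt α (α.2.getD k default).1) = false →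
    c.getD k Orientation.straight = Orientation.straight) ∧
  (∀ k k', k < α.2.length → k' < α.2.length → k ≠ k' →
    c.getD k Orientation.straight = Orientation.straight →
    c.getD k' Orientation.straight = Orientation.straight →
    sideMid (e.getD (α.2.getD k default).1.1 default) (α.2.getD k default).1.2 ≠
      sideMid (e.getD (α.2.getD k' default).1.1 default) (α.2.getD k' default).1.2)

/-- A configuration is valid if some embedding realizes it. -/
def ValidConfig (α : Assembly) (c : Configuration) : Prop := ∃ e, Realizes α c e

/-- An assembly is rigid if it has a valid configuration and any two valid
configurations are equal or chiral to each other (so it has exactly one valid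
configuration, or exactly two which are chiral versions of each other). -/
def Rigid (α : Assembly) : Prop :=
  (∃ c, ValidConfig α c) ∧
    ∀ c c', ValidConfig α c → ValidConfig α c' → c' = c ∨ c' = chiralCfg c

/-- An assembly is flexible if it is not rigid. -/
def Flexible (α : Assembly) : Prop := ¬ Rigid α

/-- An FTAM system: a finite tile set, a seed assembly, and a temperature. -/
abbrev FTAMSystem := List TileType × Assembly × ℕ

/-- An attachment of one side of a new tile:
(side of the new tile, index of an existing tile, its side, bond orientation). -/
abbrev Attachment := Side × ℕ × Side × Orientation

/-- A frontier location: a tile type together with the attachments it binds by. -/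
abbrev FrontierLoc := TileType × List Attachment

/-- The chiral version of a frontier location: invert all bond orientations. -/
def chiralFrontier (f : FrontierLoc) : FrontierLoc :=
  (f.1, f.2.map fun a => (a.1, a.2.1, a.2.2.1, invertOr a.2.2.2))

/-- `f` is a frontier location of assembly `α` in valid configuration `c`, for system
`S`: a tile of type `f.1 ∈ S.1` can be placed, in some embedding realizing `c`, without
overlap, binding via the attachments `f.2` (matching glues, rigid glues Straight,
geometrically realized) with total strength at least the temperature `S.2.2`. -/
def IsFrontier (S : FTAMSystem) (α : Assembly) (c : Configuration) (f : FrontierLoc) :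
    Prop :=
  f.1 ∈ S.1 ∧ f.2 ≠ [] ∧ (f.2.map Prod.fst).Nodup ∧
  (∀ a ∈ f.2, a.2.1 < α.1.length) ∧
  S.2.2 ≤ (f.2.map fun a => glueStrength (tileGlue f.1 a.1)).sum ∧
  ∃ e p, Realizes α c e ∧ PlacementOK p ∧ (∀ q ∈ e, ¬ overlap p q) ∧
    ∀ a ∈ f.2,
      gluesMatch (tileGlue f.1 a.1) (glueAt α (a.2.1, a.2.2.1)) ∧
      (glueFlexible (tileGlue f.1 a.1) = false → a.2.2.2 = Orientation.straight) ∧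
      orientedBond p a.1 (e.getD a.2.1 default) a.2.2.1 a.2.2.2

/-- The assembly obtained by attaching a tile at frontier location `f`. -/
def attachAsm (α : Assembly) (f : FrontierLoc) : Assembly :=
  (α.1 ++ [f.1], α.2 ++ f.2.map fun a => ((α.1.length, a.1), (a.2.1, a.2.2.1)))

/-- The configuration obtained by extending `c` with the orientations of the new bonds. -/
def attachCfg (c : Configuration) (f : FrontierLoc) : Configuration :=
  c ++ f.2.map fun a => a.2.2.2

/-- The bond list `N` can be added to `α` while keeping some valid configuration. -/
def ExtendsBonds (α : Assembly) (N : List BondSpec) : Prop :=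
  ∃ c, ValidConfig (α.1, α.2 ++ N) c

/-- One step of the assembly process: attach a tile of some type of the system at a
frontier location of some valid configuration, then form a maximum number of
additional new bonds in a bond-maximizing valid configuration. -/
def Step (S : FTAMSystem) (α α'' : Assembly) : Prop :=
  ∃ c f, ValidConfig α c ∧ IsFrontier S α c f ∧
    ∃ N, ExtendsBonds (attachAsm α f) N ∧
      (∀ N', ExtendsBonds (attachAsm α f) N' → N'.length ≤ N.length) ∧
      α'' = ((attachAsm α f).1, (attachAsm α f).2 ++ N)

/-- Producible assemblies of an FTAM system. -/
inductive Producible (S : FTAMSystem) : Assembly → Prop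
  | seed : Producible S S.2.1
  | step {α α' : Assembly} : Producible S α → Step S α α' → Producible S α'

/-- An assembly is terminal if no valid configuration admits a frontier location. -/
def Terminal (S : FTAMSystem) (α : Assembly) : Prop :=
  ∀ c, ValidConfig α c → ∀ f, ¬ IsFrontier S α c f

/-- A terminal assembly of the system: producible and terminal. -/
def TerminalAsm (S : FTAMSystem) (α : Assembly) : Prop := Producible S α ∧ Terminal S α

/-! ### Rigid components, faces -/

/-- The restriction of a configuration to the bonds lying inside a set `R` of tiles. -/
def restrictCfg (α : Assembly) (R : Finset ℕ) (c : Configuration) : Configuration :=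
  ((α.2.zip c).filter fun bc => decide (bc.1.1.1 ∈ R ∧ bc.1.2.1 ∈ R)).map Prod.snd

/-- `R` is a rigid component of `α`: the subassembly on `R` cannot reconfigure except
by inversion into its chiral configuration. -/
def RigidComponent (α : Assembly) (R : Finset ℕ) : Prop :=
  (∀ i ∈ R, i < α.1.length) ∧
    ∀ c c', ValidConfig α c → ValidConfig α c' →
      restrictCfg α R c' = restrictCfg α R c ∨
        restrictCfg α R c' = chiralCfg (restrictCfg α R c)

/-- Tiles `i` and `j` are joined by a rigid bond of `α`. -/
def rigidBondBetween (α : Assembly) (i j : ℕ) : Prop :=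
  ∃ b ∈ α.2, ((b.1.1 = i ∧ b.2.1 = j) ∨ (b.1.1 = j ∧ b.2.1 = i)) ∧
    glueFlexible (glueAt α b.1) = false

/-- A face of an assembly: a maximal nonempty set of tiles all connected to each other
through rigid bonds (hence coplanar in every embedding). -/
def IsFace (α : Assembly) (F : Finset ℕ) : Prop :=
  F.Nonempty ∧ (∀ i ∈ F, i < α.1.length) ∧
  (∀ i ∈ F, ∀ j ∈ F,
    Relation.ReflTransGen (fun a b => rigidBondBetween α a b ∧ a ∈ F ∧ b ∈ F) i j) ∧
  ∀ i ∈ F, ∀ j, rigidBondBetween α i j → j ∈ F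

/-- Two placements are coplanar: same normal axis and same plane offset. -/
def coplanar (p p' : Placement) : Prop :=
  normalAxis p = normalAxis p' ∧ p.1 (normalAxis p) = p'.1 (normalAxis p)

/-! ### Shapes, congruence, polycubes and outlines -/

/-- A tile location: a minimal corner together with the axis normal to its plane. -/
abbrev TileLoc := Vec3 × Fin 3

/-- The shape of an embedding: the set of tile locations it occupies. -/
def shapeOf (e : Embedding) : Set TileLoc := {la | ∃ p ∈ e, la = (p.1, normalAxis p)}

/-- A signed permutation of the coordinates of `ℤ³` (an element of the hyperoctahedral
group `O(3, ℤ)`). -/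
structure SignedPerm where
  perm : Equiv.Perm (Fin 3)
  sgn : Fin 3 → Bool

/-- Action of a signed permutation on a vector. -/
def SignedPerm.act (g : SignedPerm) (v : Vec3) : Vec3 :=
  fun i => (if g.sgn i then -1 else 1) * v (g.perm.symm i)

/-- Determinant of a signed permutation. -/
def SignedPerm.det (g : SignedPerm) : ℤ :=
  ((Equiv.Perm.sign g.perm : ℤˣ) : ℤ) * ∏ i, (if g.sgn i then (-1 : ℤ) else 1)

/-- Trace of a signed permutation. -/
def SignedPerm.trace (g : SignedPerm) : ℤ :=
  ∑ i, if g.perm i = i then (if g.sgn i then (-1 : ℤ) else 1) else 0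

/-- The opposite corner of the tile at location `la` across its diagonal. -/
def tileDiag (la : TileLoc) : Vec3 := la.1 + unitVec (la.2 + 1) + unitVec (la.2 + 2)

/-- The image of a tile location under the rigid motion `v ↦ g.act v + t`. -/
def mapTile (g : SignedPerm) (t : Vec3) (la : TileLoc) : TileLoc :=
  (fun i => min (g.act la.1 i + t i) (g.act (tileDiag la) i + t i), g.perm la.2)

/-- Two shapes are congruent: one is carried to the other by a rotation (a signed
permutation of determinant `1`) followed by a translation. -/
def CongruentShapes (s s' : Set TileLoc) : Prop :=
  ∃ g t, SignedPerm.det g = 1 ∧ (mapTile g t) '' s = s'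

/-- Face-adjacency of unit cubes (given by their minimal corners). -/
def cubeAdj (a b : Vec3) : Prop := ∃ i, b = a + unitVec i ∨ a = b + unitVec i

/-- A polycube: a nonempty finite face-connected set of unit cubes. -/
def IsPolycube (P : Finset Vec3) : Prop :=
  P.Nonempty ∧ ∀ a ∈ P, ∀ b ∈ P,
    Relation.ReflTransGen (fun x y => cubeAdj x y ∧ x ∈ P ∧ y ∈ P) a b

/-- The outline of a polycube: the tile locations on its outer surface (squares with
exactly one of the two adjacent cubes in the polycube). -/
def outline (P : Finset Vec3) : Set TileLoc :=
  {la | Xor' (la.1 - unitVec la.2 ∈ P) (la.1 ∈ P)}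

/-- The image of a unit cube (given by its minimal corner) under `v ↦ g.act v + t`. -/
def cubeImage (g : SignedPerm) (t : Vec3) (c : Vec3) : Vec3 :=
  fun i => min (g.act c i + t i) (g.act (c + fun _ => (1 : ℤ)) i + t i)

/-- The polycube has a plane of mirror symmetry: an affine involution whose linear part
is a signed permutation of determinant `-1` and trace `1` (a plane reflection) maps the
polycube onto itself. -/
def MirrorSymmetric (P : Finset Vec3) : Prop :=
  ∃ g t, SignedPerm.det g = -1 ∧ SignedPerm.trace g = 1 ∧
    (∀ v, g.act (g.act v + t) + t = v) ∧
    ∀ c, c ∈ P ↔ cubeImage g t c ∈ P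

/-- A corner of the `2 × 2 × 2` block of cubes around a lattice point. -/
abbrev Corner := Fin 3 → Bool

/-- Action of a signed permutation on corners of the `2 × 2 × 2` block. -/
def SignedPerm.actB (g : SignedPerm) (δ : Corner) : Corner :=
  fun i => xor (g.sgn i) (δ (g.perm.symm i))

def cornerVec (δ : Corner) : Vec3 := fun i => if δ i then 1 else 0

/-- The local pattern of the polycube `P` at the lattice point `v`: which of the eight
cubes of the `2 × 2 × 2` block around `v` belong to `P`. -/
def localPattern (P : Finset Vec3) (v : Vec3) : Set Corner :=
  {δ | v - (fun _ => (1 : ℤ)) + cornerVec δ ∈ P}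

/-- The pattern of two cubes sharing exactly one edge (vertex type 3). -/
def edgePairPattern : Set Corner :=
  {δ | (∀ i, δ i = false) ∨ (δ 0 = true ∧ δ 1 = true ∧ δ 2 = false)}

/-- A reconfigurable vertex of a polycube: the local `2 × 2 × 2` pattern is, up to a
symmetry of the cube, the edge-sharing pair of cubes (type 3) or its complement
(type 7); these are the vertices whose six incident surface tiles are joined in a loop
entirely by flexible bonds. -/
def ReconfigurableVertex (P : Finset Vec3) (v : Vec3) : Prop :=
  ∃ g : SignedPerm,
    (∀ δ : Corner, δ ∈ localPattern P v ↔ SignedPerm.actB g δ ∈ edgePairPattern) ∨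
    (∀ δ : Corner, δ ∈ localPattern P v ↔ SignedPerm.actB g δ ∉ edgePairPattern)

/-- An edge location: a unit lattice segment from `s.1` to `s.1 + unitVec s.2`. -/
abbrev EdgeLoc := Vec3 × Fin 3

/-- The four boundary edge segments of a tile location. -/
def sidesOfTile (la : TileLoc) : Finset EdgeLoc :=
  {(la.1, la.2 + 1), (la.1 + unitVec (la.2 + 2), la.2 + 1),
   (la.1, la.2 + 2), (la.1 + unitVec (la.2 + 1), la.2 + 2)}

/-- The outline tiles incident to an edge segment. -/
def incidentTiles (P : Finset Vec3) (s : EdgeLoc) : Set TileLoc :=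
  {la | la ∈ outline P ∧ s ∈ sidesOfTile la}

/-- A crease edge (an edge of the polycube): an edge of the outline at which the
surface is not flat (not exactly two incident coplanar outline tiles). -/
def CreaseEdge (P : Finset Vec3) (s : EdgeLoc) : Prop :=
  (incidentTiles P s).Nonempty ∧
    ¬ ∃ la la' : TileLoc, la ≠ la' ∧ incidentTiles P s = {la, la'} ∧ la.2 = la'.2

def edgeEndpoints (s : EdgeLoc) : Set Vec3 := {s.1, s.1 + unitVec s.2}

def edgesAdjacent (s s' : EdgeLoc) : Prop :=
  ∃ v, v ∈ edgeEndpoints s ∧ v ∈ edgeEndpoints s'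

/-- The edges of a polycube are all connected: any two crease edges are joined by a
chain of crease edges sharing endpoints. -/
def EdgesConnected (P : Finset Vec3) : Prop :=
  ∀ s, CreaseEdge P s → ∀ s', CreaseEdge P s' →
    Relation.ReflTransGen
      (fun a b => edgesAdjacent a b ∧ CreaseEdge P a ∧ CreaseEdge P b) s s'

/-- The system deterministically assembles the shape `s`: it has a terminal assembly
and every embedding of every valid configuration of every terminal assembly has shape
`s` (up to translation and rotation). -/
def DeterministicallyAssembles (S : FTAMSystem) (s : Set TileLoc) : Prop :=
  (∃ α, TerminalAsm S α) ∧
    ∀ α, TerminalAsm S α → ∀ c e, Realizes α c e → CongruentShapes (shapeOf e) s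

/-! ### Complexity-theoretic notions -/

instance : Encodable (FTAMSystem × Assembly) := inferInstance
instance : Primcodable FTAMSystem := inferInstance


/-- A function `ℕ → ℕ` computable in polynomial time by a two-stack Turing machine
(with respect to binary encodings). -/
def PolyTimeFun (f : ℕ → ℕ) : Prop :=
  Nonempty (Turing.TM2ComputableInPolyTime Computability.encodingNatBool.encode
    Computability.encodingNatBool.encode f)

/-- A Boolean predicate on `ℕ` computable in polynomial time. -/
def PolyTimePred (f : ℕ → Bool) : Prop :=
  Nonempty (Turing.TM2ComputableInPolyTime Computability.encodingNatBool.encode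
    Computability.encodingBoolBool.encode f)

/-- A language over `ℕ` is in NP: some polynomial-time verifier accepts exactly the
members, given a certificate of polynomially bounded size. -/
def InNP (L : ℕ → Prop) : Prop :=
  ∃ (V : ℕ → Bool) (p : Polynomial ℕ), PolyTimePred V ∧
    ∀ x, L x ↔ ∃ w, Nat.size w ≤ p.eval (Nat.size x) ∧ V (Nat.pair x w) = true

/-- NP-hardness under polynomial-time many-one reductions. -/
def NPHard (L : ℕ → Prop) : Prop :=
  ∀ L', InNP L' → ∃ f : ℕ → ℕ, PolyTimeFun f ∧ ∀ x, L' x ↔ L (f x)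

/-- A language is co-NP-complete if its complement is in NP and its complement is
NP-hard. -/
def CoNPComplete (L : ℕ → Prop) : Prop :=
  InNP (fun x => ¬ L x) ∧ NPHard (fun x => ¬ L x)

/-- The Rigidity-from-assembly problem, as a language over `ℕ` via the canonical
encoding (inputs that encode a pair of a system and a producible assembly are
yes-instances exactly when the assembly is rigid). -/
def RigidityFromAssembly (n : ℕ) : Prop :=
  ∀ (S : FTAMSystem) (α : Assembly),
    Encodable.encode (S, α) = n → Producible S α → Rigid α

/-- The Terminality-from-assembly problem, as a language over `ℕ`. -/
def TerminalityFromAssembly (n : ℕ) : Prop :=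
  ∀ (S : FTAMSystem) (α : Assembly),
    Encodable.encode (S, α) = n → Producible S α → Terminal S α

/-! ### 3SAT -/

/-- A literal: a variable index and a polarity. -/
abbrev Lit := ℕ × Bool

/-- A clause with three literals. -/
abbrev Clause3 := Lit × Lit × Lit

/-- A Boolean formula in 3CNF. -/
abbrev CNF3 := List Clause3

def litVal (v : ℕ → Bool) (l : Lit) : Bool := if l.2 then v l.1 else ! v l.1

/-- Satisfiability of a 3CNF formula. -/
def Sat3 (φ : CNF3) : Prop :=
  ∃ v : ℕ → Bool, ∀ cl ∈ φ,
    litVal v cl.1 = true ∨ litVal v cl.2.1 = true ∨ litVal v cl.2.2 = true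


/-- The four lattice corners of a placed tile. -/
def placementCorners (p : Placement) : Finset Vec3 :=
  {p.1, p.1 + unitVec (normalAxis p + 1), p.1 + unitVec (normalAxis p + 2),
   p.1 + unitVec (normalAxis p + 1) + unitVec (normalAxis p + 2)}

/-- The solid `n × n × n` cube as a polycube. -/
def cubeP (n : ℕ) : Finset Vec3 :=
  ((Finset.range n) ×ˢ (Finset.range n) ×ˢ (Finset.range n)).image
    fun x => ![(x.1 : ℤ), (x.2.1 : ℤ), (x.2.2 : ℤ)]

/-!
Reflect every tile of an embedding through the origin but keep its normal. Centres, side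
midpoints and side directions change sign while normals do not, so adjacency, overlap and
Straight bonds are preserved, whereas normals that met in front of a bond now meet behind it:
Up and Down are exchanged. The reflected embedding therefore realizes the chiral
configuration, and the reflected placement of the new tile witnesses the chiral frontier
location. Attaching does not record the bond orientations in the assembly, only in the
configuration.
-/

lemma dirVec_not (d : Dir) : dirVec (d.1, !d.2) = -dirVec d := by
  funext j
  rcases d with ⟨i, _ | _⟩ <;> simp [dirVec]

lemma cross_neg_left (u v : Vec3) : cross (-u) v = -cross u v := by
  funext i
  simp only [cross, Pi.neg_apply]
  ring

def mirror (p : Placement) : Placement :=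
  (-p.1 - unitVec (normalAxis p + 1) - unitVec (normalAxis p + 2), p.2.1, (p.2.2.1, !p.2.2.2))

section Mirror

variable (p q : Placement) (s : Side)

lemma normalVec_mirror : normalVec (mirror p) = normalVec p := rfl

lemma center2_mirror : center2 (mirror p) = -center2 p := by
  funext i
  simp only [center2, mirror, normalAxis, Pi.add_apply, Pi.sub_apply, Pi.neg_apply,
    Pi.smul_apply, smul_eq_mul]
  ring

lemma sideDir_mirror : sideDir (mirror p) s = -sideDir p s := by
  have hN : dirVec (mirror p).2.2 = -dirVec p.2.2 := dirVec_not p.2.2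
  unfold sideDir
  rw [hN, normalVec_mirror]
  split_ifs <;> simp [cross_neg_left]

lemma sideMid_mirror : sideMid (mirror p) s = -sideMid p s := by
  rw [sideMid, sideMid, center2_mirror, sideDir_mirror, neg_add]

lemma sideAxis_mirror : sideAxis (mirror p) s = -sideAxis p s := by
  rw [sideAxis, sideAxis, sideDir_mirror, normalVec_mirror, cross_neg_left]

variable {p q}

lemma overlap.of_mirror (h : overlap (mirror p) (mirror q)) : overlap p q := by
  obtain ⟨hcorner, haxis⟩ := h
  have haxis' : normalAxis p = normalAxis q := haxis
  refine ⟨?_, haxis'⟩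
  have hcorner' : -p.1 - unitVec (normalAxis p + 1) - unitVec (normalAxis p + 2)
      = -q.1 - unitVec (normalAxis q + 1) - unitVec (normalAxis q + 2) := hcorner
  rw [haxis'] at hcorner'
  linear_combination -hcorner'

lemma sidesAdjacent.mirror {s' : Side} (h : sidesAdjacent p s q s') :
    sidesAdjacent (mirror p) s (mirror q) s' := by
  obtain ⟨hmid, haxis⟩ := h
  refine ⟨by rw [sideMid_mirror, sideMid_mirror, hmid], ?_⟩
  simp only [sideAxis_mirror, neg_inj]
  exact haxis

lemma center2_mirror_add_eq_iff {t t' : ℤ} :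
    center2 (mirror p) + t • normalVec (mirror p) = center2 (mirror q) + t' • normalVec (mirror q)
      ↔ center2 p - t • normalVec p = center2 q - t' • normalVec q := by
  rw [center2_mirror, center2_mirror, normalVec_mirror, normalVec_mirror]
  constructor <;> intro h <;> linear_combination -h

lemma center2_mirror_sub_eq_iff {t t' : ℤ} :
    center2 (mirror p) - t • normalVec (mirror p) = center2 (mirror q) - t' • normalVec (mirror q)
      ↔ center2 p + t • normalVec p = center2 q + t' • normalVec q := by
  rw [center2_mirror, center2_mirror, normalVec_mirror, normalVec_mirror]
  constructor <;> intro h <;> linear_combination -h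

lemma orientedBond.mirror {s' : Side} {θ : Orientation} (h : orientedBond p s q s' θ) :
    orientedBond (mirror p) s (mirror q) s' (invertOr θ) := by
  obtain ⟨hadj, hθ⟩ := h
  refine ⟨hadj.mirror, ?_⟩
  fin_cases θ
  · rw [if_neg (by decide), if_pos (by decide)] at hθ
    rw [if_neg (by decide), if_neg (by decide)]
    simpa only [center2_mirror_sub_eq_iff] using hθ
  · rw [if_neg (by decide), if_neg (by decide)] at hθ
    rw [if_neg (by decide), if_pos (by decide)]
    simpa only [center2_mirror_add_eq_iff] using hθ
  · rw [if_pos (by decide)] at hθ ⊢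
    rwa [normalVec_mirror, normalVec_mirror]

end Mirror

lemma invertOr_straight : invertOr Orientation.straight = Orientation.straight := by decide

lemma invertOr_eq_straight {o : Orientation} :
    invertOr o = Orientation.straight ↔ o = Orientation.straight := by
  revert o
  decide

lemma chiralCfg_getD (c : Configuration) (k : ℕ) :
    (chiralCfg c).getD k Orientation.straight = invertOr (c.getD k Orientation.straight) := by
  have h := List.getD_map (l := c) (n := k) (d := Orientation.straight) invertOr
  rwa [invertOr_straight] at h

lemma getD_map_mirror {e : Embedding} {i : ℕ} (h : i < e.length) :
    (e.map mirror).getD i default = mirror (e.getD i default) := by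
  rw [List.getD_eq_getElem _ _ (by simpa using h), List.getD_eq_getElem _ _ h, List.getElem_map]

lemma Realizes.mirror {α : Assembly} {c : Configuration} {e : Embedding}
    (h : Realizes α c e) : Realizes α (chiralCfg c) (e.map mirror) := by
  obtain ⟨hwf, hlen, hclen, hok, hov, hbond, hrigid, hmid⟩ := h
  have hends : ∀ k < α.2.length, (α.2.getD k default).1.1 < e.length ∧
      (α.2.getD k default).2.1 < e.length := by
    intro k hk
    rw [hlen]
    exact hwf.1 _ (List.getD_eq_getElem _ _ hk ▸ List.getElem_mem hk)
  refine ⟨hwf, by simpa using hlen, by simpa [chiralCfg] using hclen, ?_, ?_, ?_, ?_, ?_⟩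
  · exact List.forall_mem_map.mpr hok
  · intro i j hi hj hij hcon
    rw [List.length_map] at hi hj
    rw [getD_map_mirror hi, getD_map_mirror hj] at hcon
    exact hov i j hi hj hij hcon.of_mirror
  · intro k hk
    rw [getD_map_mirror (hends k hk).1, getD_map_mirror (hends k hk).2, chiralCfg_getD]
    exact (hbond k hk).mirror
  · intro k hk hflex
    rw [chiralCfg_getD, invertOr_eq_straight]
    exact hrigid k hk hflex
  · intro k k' hk hk' hne hs hs'
    rw [chiralCfg_getD, invertOr_eq_straight] at hs hs'
    rw [getD_map_mirror (hends k hk).1, getD_map_mirror (hends k' hk').1,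
      sideMid_mirror, sideMid_mirror, Ne, neg_inj]
    exact hmid k k' hk hk' hne hs hs'

lemma IsFrontier.chiral {S : FTAMSystem} {α : Assembly} {c : Configuration} {f : FrontierLoc}
    (hf : IsFrontier S α c f) : IsFrontier S α (chiralCfg c) (chiralFrontier f) := by
  obtain ⟨htile, hne, hnodup, hlt, hstrength, e, p, hre, hpok, hnov, hatt⟩ := hf
  refine ⟨htile, by simpa [chiralFrontier] using hne,
    by simpa [chiralFrontier, List.map_map, Function.comp_def] using hnodup,
    List.forall_mem_map.mpr hlt,
    by simpa [chiralFrontier, List.map_map, Function.comp_def] using hstrength,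
    e.map mirror, mirror p, hre.mirror, hpok,
    List.forall_mem_map.mpr fun q hq hcon => hnov q hq hcon.of_mirror,
    List.forall_mem_map.mpr fun a ha => ?_⟩
  obtain ⟨hglue, hrigid, hbond⟩ := hatt a ha
  refine ⟨hglue, fun hflex => invertOr_eq_straight.mpr (hrigid hflex), ?_⟩
  rw [getD_map_mirror (hre.2.1 ▸ hlt a ha)]
  exact hbond.mirror

lemma attachAsm_chiralFrontier (α : Assembly) (f : FrontierLoc) :
    attachAsm α (chiralFrontier f) = attachAsm α f := by
  simp [attachAsm, chiralFrontier, Function.comp_def]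

lemma attachCfg_chiralCfg (c : Configuration) (f : FrontierLoc) :
    attachCfg (chiralCfg c) (chiralFrontier f) = chiralCfg (attachCfg c f) := by
  simp [attachCfg, chiralCfg, chiralFrontier, Function.comp_def]

theorem chiral_frontier_correspondence_general
    (S : FTAMSystem) (α : Assembly) (c : Configuration) (f : FrontierLoc)
    (hf : IsFrontier S α c f) :
    IsFrontier S α (chiralCfg c) (chiralFrontier f) ∧
    (chiralFrontier f).1 = f.1 ∧
    attachAsm α (chiralFrontier f) = attachAsm α f ∧
    attachCfg (chiralCfg c) (chiralFrontier f) = chiralCfg (attachCfg c f) :=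
  ⟨hf.chiral, rfl, attachAsm_chiralFrontier α f, attachCfg_chiralCfg c f⟩

/-- Every frontier location `f` of an assembly `α` in a valid
configuration `c` has a corresponding frontier location (with the same tile type) in
the chiral configuration of `c`, such that attaching at `f` in `c` produces the same
assembly as attaching at the corresponding location in the chiral configuration, the
two resulting configurations being chiral to each other. -/
theorem chiral_frontier_correspondence
    (S : FTAMSystem) (α : Assembly) (c : Configuration) (f : FrontierLoc)
    (hc : ValidConfig α c) (hf : IsFrontier S α c f) :
    IsFrontier S α (chiralCfg c) (chiralFrontier f) ∧
    (chiralFrontier f).1 = f.1 ∧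
    attachAsm α (chiralFrontier f) = attachAsm α f ∧
    attachCfg (chiralCfg c) (chiralFrontier f) = chiralCfg (attachCfg c f) :=
  chiral_frontier_correspondence_general S α c f hf

end FTAM
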